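/- Let s ∈ (0,1), N > 2s, R > 0, and assume A is block-diagonal with symmetric B ∈ W^{1,∞}, scalar α ∈ W^{1,∞}, uniformly elliptic with constants λ₁, λ₂, and A(0) = Id_{N+1}. Define μ(z) = A(z)z·z/|z|² and β(z) = A(z)z/μ(z) for z ≠ 0 in the closed half-ball, and β'(x) = β(x,0). Then: μ and 1/μ extend to Lipschitz functions on the closed half-ball, β extends to a Lipschitz vector field on the closed half-ball, J_β ∈ L^∞, div(β) ∈ L^∞, β' ∈ L^∞(B_R', ℝ^N), and div_x(β') ∈ L^∞(B_R'). -/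

import Mathlib

open MeasureTheory Real Set

noncomputable section

variable {N : ℕ}

/-- The last (vertical) coordinate `t` of a point `z = (x,t) ∈ ℝ^{N+1}`. -/
def lastC (z : EuclideanSpace ℝ (Fin (N + 1))) : ℝ := z (Fin.last N)

/-- The upper half-ball `B_r⁺`. -/
def halfBall (N : ℕ) (r : ℝ) : Set (EuclideanSpace ℝ (Fin (N + 1))) :=
  {z | ‖z‖ < r ∧ 0 < lastC z}

/-- The disc `B_r' ⊂ ℝ^N`. -/
def disc (N : ℕ) (r : ℝ) : Set (EuclideanSpace ℝ (Fin N)) := Metric.ball 0 r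

/-- The point `(x,t) ∈ ℝ^{N+1}` built from `x ∈ ℝ^N` and `t ∈ ℝ`. -/
def up (x : EuclideanSpace ℝ (Fin N)) (t : ℝ) : EuclideanSpace ℝ (Fin (N + 1)) :=
  (EuclideanSpace.equiv (Fin (N + 1)) ℝ).symm
    (Fin.snoc (EuclideanSpace.equiv (Fin N) ℝ x) t)

/-- The Muckenhoupt weight `t^{1-2s}` (more generally `t^a`). -/
def wt (a : ℝ) (z : EuclideanSpace ℝ (Fin (N + 1))) : ℝ := lastC z ^ a

/-- `du` is the weak partial derivative of `u` in direction `i` on the open set `Ω`,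
in the distributional sense. -/
def HasWeakPartialOn (u du : EuclideanSpace ℝ (Fin (N + 1)) → ℝ)
    (i : Fin (N + 1)) (Ω : Set (EuclideanSpace ℝ (Fin (N + 1)))) : Prop :=
  ∀ φ : EuclideanSpace ℝ (Fin (N + 1)) → ℝ, ContDiff ℝ (⊤ : ℕ∞) φ → HasCompactSupport φ →
    tsupport φ ⊆ Ω →
    ∫ z in Ω, u z * fderiv ℝ φ z (EuclideanSpace.single i 1) = -∫ z in Ω, du z * φ z

/-- `du` is the weak gradient of `u` on `Ω`. -/
def HasWeakGradOn (u : EuclideanSpace ℝ (Fin (N + 1)) → ℝ)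
    (du : EuclideanSpace ℝ (Fin (N + 1)) → EuclideanSpace ℝ (Fin (N + 1)))
    (Ω : Set (EuclideanSpace ℝ (Fin (N + 1)))) : Prop :=
  ∀ i, HasWeakPartialOn u (fun z => du z i) i Ω

/-- Membership in the weighted Sobolev space `H¹(B_r⁺, t^a)`, the function `du`
playing the role of the weak gradient of `u`. -/
def MemH1W (a : ℝ) (r : ℝ) (u : EuclideanSpace ℝ (Fin (N + 1)) → ℝ)
    (du : EuclideanSpace ℝ (Fin (N + 1)) → EuclideanSpace ℝ (Fin (N + 1))) : Prop :=
  HasWeakGradOn u du (halfBall N r) ∧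
    IntegrableOn (fun z => wt a z * (u z ^ 2 + ‖du z‖ ^ 2)) (halfBall N r)

/-- `g` is the trace of `w` on the bottom disc `B_r'`, characterized by `L¹` convergence
of the horizontal slices as `t → 0⁺`. -/
def IsTraceOn (r : ℝ) (w : EuclideanSpace ℝ (Fin (N + 1)) → ℝ)
    (g : EuclideanSpace ℝ (Fin N) → ℝ) : Prop :=
  Filter.Tendsto (fun t => ∫ x in disc N r, |w (up x t) - g x|)
    (nhdsWithin 0 (Set.Ioi 0)) (nhds 0)


/-- Weak partial derivative on an open subset of `ℝ^N`. -/
def HasWeakPartialOnDisc (g dg : EuclideanSpace ℝ (Fin N) → ℝ) (i : Fin N)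
    (Ω : Set (EuclideanSpace ℝ (Fin N))) : Prop :=
  ∀ φ : EuclideanSpace ℝ (Fin N) → ℝ, ContDiff ℝ (⊤ : ℕ∞) φ → HasCompactSupport φ →
    tsupport φ ⊆ Ω →
    ∫ x in Ω, g x * fderiv ℝ φ x (EuclideanSpace.single i 1) = -∫ x in Ω, dg x * φ x

/-- Membership in `W^{1,p}(B_r')`, with prescribed weak gradient `dg`. -/
def MemW1pDisc (p r : ℝ) (g : EuclideanSpace ℝ (Fin N) → ℝ)
    (dg : EuclideanSpace ℝ (Fin N) → EuclideanSpace ℝ (Fin N)) : Prop :=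
  (∀ i : Fin N, HasWeakPartialOnDisc (fun x => g x) (fun x => dg x i) i (disc N r)) ∧
  (∫⁻ x in disc N r, ENNReal.ofReal (|g x| ^ p)) < ⊤ ∧
  (∫⁻ x in disc N r, ENNReal.ofReal (‖dg x‖ ^ p)) < ⊤

/-- The `W^{1,p}(B_r')` norm. -/
def normW1pDisc (p r : ℝ) (g : EuclideanSpace ℝ (Fin N) → ℝ)
    (dg : EuclideanSpace ℝ (Fin N) → EuclideanSpace ℝ (Fin N)) : ℝ :=
  ((∫ x in disc N r, |g x| ^ p) + ∫ x in disc N r, ‖dg x‖ ^ p) ^ (1 / p)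

/-- The bilinear form `(A(z) y) · y'`. -/
def quadA (A : EuclideanSpace ℝ (Fin (N + 1)) → Matrix (Fin (N + 1)) (Fin (N + 1)) ℝ)
    (z y y' : EuclideanSpace ℝ (Fin (N + 1))) : ℝ :=
  ∑ i : Fin (N + 1), ∑ j : Fin (N + 1), A z i j * y j * y' i

/-- Structural assumption on `A`: block-diagonal form with symmetric upper-left
`N×N` block (equivalently, `A` symmetric with vanishing mixed entries),
entries bounded and Lipschitz (i.e. `W^{1,∞}`) with constant `Λ` on the closed
half-ball, and uniform ellipticity `λ₁|y|² ≤ A(z)y·y ≤ λ₂|y|²`. -/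
def GoodMatrix (R Λ lam1 lam2 : ℝ)
    (A : EuclideanSpace ℝ (Fin (N + 1)) → Matrix (Fin (N + 1)) (Fin (N + 1)) ℝ) : Prop :=
  (∀ z ∈ closure (halfBall N R), ∀ i j : Fin (N + 1), A z i j = A z j i) ∧
  (∀ z ∈ closure (halfBall N R), ∀ i : Fin N, A z i.castSucc (Fin.last N) = 0) ∧
  (∀ i j : Fin (N + 1), (∀ z ∈ closure (halfBall N R), |A z i j| ≤ Λ) ∧
    LipschitzOnWith (Real.toNNReal Λ) (fun z => A z i j) (closure (halfBall N R))) ∧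
  (∀ z ∈ closure (halfBall N R), ∀ y : EuclideanSpace ℝ (Fin (N + 1)),
    lam1 * ‖y‖ ^ 2 ≤ quadA A z y y ∧ quadA A z y y ≤ lam2 * ‖y‖ ^ 2)

/-- `U` (with weak gradient `dU` and trace `trU`) is a weak solution of
`-div(t^{1-2s} A ∇U) + t^{1-2s} c = 0` in `B_R⁺` with Neumann condition
`lim_{t→0⁺} t^{1-2s} A∇U·ν = h Tr(U) + g` on `B_R'`, tested against smooth
functions vanishing near `S_R⁺`. -/
def IsWeakSolution (s R : ℝ)
    (A : EuclideanSpace ℝ (Fin (N + 1)) → Matrix (Fin (N + 1)) (Fin (N + 1)) ℝ)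
    (c : EuclideanSpace ℝ (Fin (N + 1)) → ℝ)
    (h g : EuclideanSpace ℝ (Fin N) → ℝ)
    (U : EuclideanSpace ℝ (Fin (N + 1)) → ℝ)
    (dU : EuclideanSpace ℝ (Fin (N + 1)) → EuclideanSpace ℝ (Fin (N + 1)))
    (trU : EuclideanSpace ℝ (Fin N) → ℝ) : Prop :=
  MemH1W (1 - 2 * s) R U dU ∧ IsTraceOn R U trU ∧
  ∀ φ : EuclideanSpace ℝ (Fin (N + 1)) → ℝ, ContDiff ℝ (⊤ : ℕ∞) φ →
    (∃ ρ, ρ < R ∧ ∀ z : EuclideanSpace ℝ (Fin (N + 1)), ρ ≤ ‖z‖ → φ z = 0) →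
    (∫ z in halfBall N R, wt (1 - 2 * s) z *
        ∑ i : Fin (N + 1), ∑ j : Fin (N + 1),
          A z i j * dU z j * fderiv ℝ φ z (EuclideanSpace.single i 1)) +
      (∫ z in halfBall N R, wt (1 - 2 * s) z * c z * φ z) =
    ∫ x in disc N R, (g x + h x * trU x) * φ (up x 0)

/-- `μ(z) = A(z)z·z/|z|²`. -/
def muA (A : EuclideanSpace ℝ (Fin (N + 1)) → Matrix (Fin (N + 1)) (Fin (N + 1)) ℝ)
    (z : EuclideanSpace ℝ (Fin (N + 1))) : ℝ := quadA A z z z / ‖z‖ ^ 2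

/-- `β(z) = A(z)z/μ(z)` (componentwise). -/
def betaA (A : EuclideanSpace ℝ (Fin (N + 1)) → Matrix (Fin (N + 1)) (Fin (N + 1)) ℝ)
    (z : EuclideanSpace ℝ (Fin (N + 1))) (i : Fin (N + 1)) : ℝ :=
  (A z).mulVec (fun j => z j) i / muA A z


namespace MuBetaAux

lemma norm_sq_sum {n : ℕ} (z : EuclideanSpace ℝ (Fin n)) : ‖z‖^2 = ∑ i, (z i)^2 := by
  rw [EuclideanSpace.norm_eq, Real.sq_sqrt (by positivity)]
  simp [sq_abs]

lemma coord_le {n : ℕ} (z : EuclideanSpace ℝ (Fin n)) (i : Fin n) : |z i| ≤ ‖z‖ := by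
  rw [EuclideanSpace.norm_eq]
  calc |z i| = Real.sqrt (‖z i‖^2) := by rw [Real.sqrt_sq (norm_nonneg _)]; simp
  _ ≤ _ := Real.sqrt_le_sqrt (Finset.single_le_sum (f := fun j => ‖z j‖^2)
      (fun j _ => sq_nonneg _) (Finset.mem_univ i))

lemma norm_le_sum {n : ℕ} (z : EuclideanSpace ℝ (Fin n)) : ‖z‖ ≤ ∑ i, |z i| := by
  rw [EuclideanSpace.norm_eq]
  have h : ∑ i, ‖z i‖^2 ≤ (∑ i, |z i|)^2 := by
    simpa [Real.norm_eq_abs] using Finset.sum_sq_le_sq_sum_of_nonneg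
      (s := Finset.univ) (f := fun i => |z i|) (fun i _ => abs_nonneg _)
  calc Real.sqrt (∑ i, ‖z i‖^2) ≤ Real.sqrt ((∑ i, |z i|)^2) := Real.sqrt_le_sqrt h
  _ = _ := Real.sqrt_sq (Finset.sum_nonneg fun i _ => abs_nonneg _)

lemma norm_unit {n : ℕ} (z : EuclideanSpace ℝ (Fin n)) (hz : z ≠ 0) :
    ‖(‖z‖⁻¹ • z : EuclideanSpace ℝ (Fin n))‖ = 1 := by
  rw [norm_smul, norm_inv, norm_norm, inv_mul_cancel₀ (norm_ne_zero_iff.mpr hz)]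

lemma unit_coord_le {n : ℕ} (z : EuclideanSpace ℝ (Fin n)) (hz : z ≠ 0) (i : Fin n) :
    |(‖z‖⁻¹ • z : EuclideanSpace ℝ (Fin n)) i| ≤ 1 := by
  simpa [norm_unit z hz] using coord_le (‖z‖⁻¹ • z : EuclideanSpace ℝ (Fin n)) i

lemma unit_sub {n : ℕ} (z w : EuclideanSpace ℝ (Fin n)) (hz : z ≠ 0) (hw : w ≠ 0) :
    ‖(‖z‖⁻¹ • z : EuclideanSpace ℝ (Fin n)) - ‖w‖⁻¹ • w‖ ≤ 2 * ‖z - w‖ / ‖z‖ := by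
  have haz : (0:ℝ) < ‖z‖ := norm_pos_iff.mpr hz
  have haw : (0:ℝ) < ‖w‖ := norm_pos_iff.mpr hw
  have key : (‖z‖⁻¹ • z : EuclideanSpace ℝ (Fin n)) - ‖w‖⁻¹ • w
      = ‖z‖⁻¹ • (z - w) + (‖z‖⁻¹ - ‖w‖⁻¹) • w := by
    rw [smul_sub, sub_smul]; abel
  rw [key]
  have hc : |‖z‖⁻¹ - ‖w‖⁻¹| * ‖w‖ = |‖w‖ - ‖z‖| / ‖z‖ := by
    rw [inv_sub_inv haz.ne' haw.ne', abs_div, abs_mul, abs_of_pos haz, abs_of_pos haw]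
    field_simp
  have habs : |‖w‖ - ‖z‖| ≤ ‖z - w‖ := by
    simpa [norm_sub_rev] using abs_norm_sub_norm_le w z
  have h2 : ‖((‖z‖⁻¹ - ‖w‖⁻¹) • w : EuclideanSpace ℝ (Fin n))‖ ≤ ‖z - w‖ / ‖z‖ := by
    rw [norm_smul, Real.norm_eq_abs, hc]
    exact div_le_div_of_nonneg_right habs haz.le
  have h1 : ‖(‖z‖⁻¹ • (z - w) : EuclideanSpace ℝ (Fin n))‖ = ‖z - w‖ / ‖z‖ := by
    rw [norm_smul, norm_inv, norm_norm, inv_mul_eq_div]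
  calc ‖(‖z‖⁻¹ • (z - w) : EuclideanSpace ℝ (Fin n)) + (‖z‖⁻¹ - ‖w‖⁻¹) • w‖
      ≤ ‖(‖z‖⁻¹ • (z - w) : EuclideanSpace ℝ (Fin n))‖
        + ‖((‖z‖⁻¹ - ‖w‖⁻¹) • w : EuclideanSpace ℝ (Fin n))‖ := norm_add_le _ _
  _ ≤ ‖z - w‖ / ‖z‖ + ‖z - w‖ / ‖z‖ := by rw [h1]; exact add_le_add le_rfl h2
  _ = 2 * ‖z - w‖ / ‖z‖ := by ring

lemma fderiv_bound {X : Type*} [NormedAddCommGroup X] [NormedSpace ℝ X]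
    {f : X → ℝ} {K : NNReal} (hf : LipschitzWith K f) (x : X) (v : X) :
    |fderiv ℝ f x v| ≤ (K:ℝ) * ‖v‖ := by
  have h := norm_fderiv_le_of_lipschitz ℝ hf (x₀ := x)
  calc |fderiv ℝ f x v| = ‖fderiv ℝ f x v‖ := (Real.norm_eq_abs _).symm
  _ ≤ ‖fderiv ℝ f x‖ * ‖v‖ := ContinuousLinearMap.le_opNorm _ _
  _ ≤ (K:ℝ) * ‖v‖ := mul_le_mul_of_nonneg_right h (norm_nonneg v)

end MuBetaAux

section MuBetaUp

variable {N : ℕ}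

lemma up_castSucc (x : EuclideanSpace ℝ (Fin N)) (t : ℝ) (i : Fin N) :
    up x t i.castSucc = x i := by
  simp [up, Fin.snoc_castSucc]

lemma up_last (x : EuclideanSpace ℝ (Fin N)) (t : ℝ) : up x t (Fin.last N) = t := by
  simp [up]

lemma lastC_up (x : EuclideanSpace ℝ (Fin N)) (t : ℝ) : lastC (up x t) = t := up_last x t

lemma up_sub_up (x y : EuclideanSpace ℝ (Fin N)) : up x 0 - up y 0 = up (x - y) 0 := by
  ext j
  refine Fin.lastCases ?_ (fun i => ?_) j
  · simp [up_last]
  · simp [up_castSucc]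

lemma norm_up_zero (x : EuclideanSpace ℝ (Fin N)) : ‖up x 0‖ = ‖x‖ := by
  rw [EuclideanSpace.norm_eq, EuclideanSpace.norm_eq]
  congr 1
  rw [Fin.sum_univ_castSucc]
  simp [up_castSucc, up_last]

lemma up_eq_add (x : EuclideanSpace ℝ (Fin N)) (t : ℝ) :
    up x t = up x 0 + t • up (0 : EuclideanSpace ℝ (Fin N)) 1 := by
  ext j
  refine Fin.lastCases ?_ (fun i => ?_) j
  · simp [up_last]
  · simp [up_castSucc]

lemma norm_up_one : ‖up (0 : EuclideanSpace ℝ (Fin N)) 1‖ = 1 := by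
  rw [EuclideanSpace.norm_eq, Fin.sum_univ_castSucc]
  simp [up_castSucc, up_last]

lemma norm_up_le (x : EuclideanSpace ℝ (Fin N)) (t : ℝ) : ‖up x t‖ ≤ ‖x‖ + |t| := by
  rw [up_eq_add]
  calc ‖up x 0 + t • up (0 : EuclideanSpace ℝ (Fin N)) 1‖
      ≤ ‖up x 0‖ + ‖t • up (0 : EuclideanSpace ℝ (Fin N)) 1‖ := norm_add_le _ _
  _ = ‖x‖ + |t| := by rw [norm_up_zero, norm_smul, Real.norm_eq_abs, norm_up_one, mul_one]

lemma mem_closure_up {R : ℝ} (x : EuclideanSpace ℝ (Fin N)) (hx : ‖x‖ < R) :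
    up x 0 ∈ closure (halfBall N R) := by
  have hcont : Continuous (fun t : ℝ => up x t) := by
    have : (fun t : ℝ => up x t)
        = fun t : ℝ => up x 0 + t • up (0 : EuclideanSpace ℝ (Fin N)) 1 := by
      funext t; exact up_eq_add x t
    rw [this]
    exact continuous_const.add (continuous_id.smul continuous_const)
  have htend : Filter.Tendsto (fun t : ℝ => up x t) (nhdsWithin 0 (Set.Ioi 0))
      (nhds (up x 0)) := (hcont.tendsto 0).mono_left nhdsWithin_le_nhds
  refine mem_closure_of_tendsto htend ?_
  have hmem : Set.Ioo (0:ℝ) (R - ‖x‖) ∈ nhdsWithin (0:ℝ) (Set.Ioi 0) :=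
    Ioo_mem_nhdsGT_of_mem ⟨le_refl _, by linarith⟩
  filter_upwards [hmem] with t ht
  refine ⟨?_, ?_⟩
  · calc ‖up x t‖ ≤ ‖x‖ + |t| := norm_up_le x t
    _ = ‖x‖ + t := by rw [abs_of_pos ht.1]
    _ < R := by linarith [ht.2]
  · rw [lastC_up]; exact ht.1

lemma up_zero_zero : up (0 : EuclideanSpace ℝ (Fin N)) 0 = 0 := by
  ext j
  refine Fin.lastCases ?_ (fun i => ?_) j
  · simp [up_last]
  · simp [up_castSucc]

lemma zero_mem_closure_halfBall {R : ℝ} (hR : 0 < R) :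
    (0 : EuclideanSpace ℝ (Fin (N+1))) ∈ closure (halfBall N R) := by
  have := mem_closure_up (R := R) (0 : EuclideanSpace ℝ (Fin N)) (by simpa using hR)
  rwa [up_zero_zero] at this

lemma norm_le_of_mem_closure_halfBall {R : ℝ} {z : EuclideanSpace ℝ (Fin (N+1))}
    (hz : z ∈ closure (halfBall N R)) : ‖z‖ ≤ R := by
  have hsub : halfBall N R ⊆ Metric.closedBall 0 R := fun w hw => by
    simpa [Metric.mem_closedBall, dist_zero_right] using hw.1.le
  have := closure_minimal hsub Metric.isClosed_closedBall hz
  simpa [Metric.mem_closedBall, dist_zero_right] using this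

end MuBetaUp

section MuBetaCore

open MuBetaAux

variable {N : ℕ} {R Λ lam1 lam2 : ℝ}
  {A : EuclideanSpace ℝ (Fin (N + 1)) → Matrix (Fin (N + 1)) (Fin (N + 1)) ℝ}

lemma muA_expand (z : EuclideanSpace ℝ (Fin (N+1))) (hz : z ≠ 0) :
    muA A z = ∑ i, ∑ j, A z i j * ((‖z‖⁻¹ • z : EuclideanSpace ℝ (Fin (N+1))) j)
      * ((‖z‖⁻¹ • z : EuclideanSpace ℝ (Fin (N+1))) i) := by
  have h : (‖z‖:ℝ) ≠ 0 := norm_ne_zero_iff.mpr hz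
  unfold muA quadA
  rw [Finset.sum_div]
  refine Finset.sum_congr rfl fun i _ => ?_
  rw [Finset.sum_div]
  refine Finset.sum_congr rfl fun j _ => ?_
  have e1 : ((‖z‖⁻¹ • z : EuclideanSpace ℝ (Fin (N+1))) j) = ‖z‖⁻¹ * z j := rfl
  have e2 : ((‖z‖⁻¹ • z : EuclideanSpace ℝ (Fin (N+1))) i) = ‖z‖⁻¹ * z i := rfl
  rw [e1, e2, div_eq_mul_inv, ← inv_pow]
  ring

lemma sum_one_matrix (u : EuclideanSpace ℝ (Fin (N+1))) :
    ∑ i, ∑ j, (1 : Matrix (Fin (N+1)) (Fin (N+1)) ℝ) i j * u j * u i = ‖u‖^2 := by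
  rw [norm_sq_sum]
  refine Finset.sum_congr rfl fun i _ => ?_
  rw [Finset.sum_eq_single i]
  · rw [Matrix.one_apply_eq]; ring
  · intro j _ hj
    rw [Matrix.one_apply_ne (Ne.symm hj)]; ring
  · intro h; exact absurd (Finset.mem_univ i) h

lemma double_sum_const_bound {f : Fin (N+1) → Fin (N+1) → ℝ} {C : ℝ}
    (hf : ∀ i j, |f i j| ≤ C) : |∑ i, ∑ j, f i j| ≤ ((N:ℝ)+1)^2 * C := by
  calc |∑ i, ∑ j, f i j| ≤ ∑ i, |∑ j, f i j| := Finset.abs_sum_le_sum_abs _ _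
  _ ≤ ∑ i : Fin (N+1), ∑ j : Fin (N+1), |f i j| :=
      Finset.sum_le_sum fun i _ => Finset.abs_sum_le_sum_abs _ _
  _ ≤ ∑ _i : Fin (N+1), ∑ _j : Fin (N+1), C :=
      Finset.sum_le_sum fun i _ => Finset.sum_le_sum fun j _ => hf i j
  _ = ((N:ℝ)+1)^2 * C := by
      simp [Finset.sum_const, Finset.card_univ, nsmul_eq_mul]
      push_cast
      ring

lemma mu_sub_one_bound
    (hid : ∀ z ∈ closure (halfBall N R), ∀ i j,
      |A z i j - (1 : Matrix (Fin (N+1)) (Fin (N+1)) ℝ) i j| ≤ Λ * ‖z‖)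
    {z : EuclideanSpace ℝ (Fin (N+1))} (hzS : z ∈ closure (halfBall N R)) (hz : z ≠ 0) :
    |muA A z - 1| ≤ ((N:ℝ)+1)^2 * (Λ * ‖z‖) := by
  set u : EuclideanSpace ℝ (Fin (N+1)) := ‖z‖⁻¹ • z with hu
  have h1 : muA A z - 1 = ∑ i, ∑ j,
      (A z i j - (1 : Matrix (Fin (N+1)) (Fin (N+1)) ℝ) i j) * u j * u i := by
    have e : ∀ i j : Fin (N+1),
        (A z i j - (1 : Matrix (Fin (N+1)) (Fin (N+1)) ℝ) i j) * u j * u i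
        = A z i j * u j * u i
          - (1 : Matrix (Fin (N+1)) (Fin (N+1)) ℝ) i j * u j * u i := fun i j => by ring
    simp only [e, Finset.sum_sub_distrib]
    rw [← muA_expand z hz, sum_one_matrix, norm_unit z hz, one_pow]
  rw [h1]
  refine double_sum_const_bound fun i j => ?_
  rw [abs_mul, abs_mul]
  calc |A z i j - (1 : Matrix (Fin (N+1)) (Fin (N+1)) ℝ) i j| * |u j| * |u i|
      ≤ (Λ * ‖z‖) * 1 * 1 := by
        have h0 : (0:ℝ) ≤ Λ * ‖z‖ := le_trans (abs_nonneg _) (hid z hzS i j)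
        exact mul_le_mul (mul_le_mul (hid z hzS i j) (unit_coord_le z hz j)
          (abs_nonneg _) h0) (unit_coord_le z hz i) (abs_nonneg _)
          (by positivity)
  _ = Λ * ‖z‖ := by ring

lemma mu_diff_bound_asym (hΛ : 0 ≤ Λ)
    (hlip : ∀ i j, ∀ z ∈ closure (halfBall N R), ∀ w ∈ closure (halfBall N R),
      |A z i j - A w i j| ≤ Λ * ‖z - w‖)
    (hid : ∀ z ∈ closure (halfBall N R), ∀ i j,
      |A z i j - (1 : Matrix (Fin (N+1)) (Fin (N+1)) ℝ) i j| ≤ Λ * ‖z‖)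
    {z w : EuclideanSpace ℝ (Fin (N+1))}
    (hzS : z ∈ closure (halfBall N R)) (hwS : w ∈ closure (halfBall N R))
    (hz : z ≠ 0) (hw : w ≠ 0) (hzw : ‖w‖ ≤ ‖z‖) :
    |muA A z - muA A w| ≤ (5*((N:ℝ)+1)^2*Λ) * ‖z - w‖ := by
  have haz : (0:ℝ) < ‖z‖ := norm_pos_iff.mpr hz
  set uz : EuclideanSpace ℝ (Fin (N+1)) := ‖z‖⁻¹ • z with huz
  set uw : EuclideanSpace ℝ (Fin (N+1)) := ‖w‖⁻¹ • w with huw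
  have key : muA A z - muA A w
      = (∑ i, ∑ j, (A z i j - A w i j) * uz j * uz i)
        + (∑ i, ∑ j, (A w i j - (1 : Matrix (Fin (N+1)) (Fin (N+1)) ℝ) i j)
            * (uz j * uz i - uw j * uw i)) := by
    have e : ∀ i j : Fin (N+1),
        A z i j * uz j * uz i - A w i j * uw j * uw i
        = (A z i j - A w i j) * uz j * uz i
          + (A w i j - (1 : Matrix (Fin (N+1)) (Fin (N+1)) ℝ) i j)
            * (uz j * uz i - uw j * uw i)
          + ((1 : Matrix (Fin (N+1)) (Fin (N+1)) ℝ) i j * uz j * uz i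
            - (1 : Matrix (Fin (N+1)) (Fin (N+1)) ℝ) i j * uw j * uw i) := fun i j => by
      ring
    have h0 : muA A z - muA A w = ∑ i, ∑ j,
        (A z i j * uz j * uz i - A w i j * uw j * uw i) := by
      rw [muA_expand z hz, muA_expand w hw, ← Finset.sum_sub_distrib]
      exact Finset.sum_congr rfl fun i _ => (Finset.sum_sub_distrib _ _).symm
    rw [h0]
    simp only [e, Finset.sum_add_distrib, Finset.sum_sub_distrib]
    rw [sum_one_matrix, sum_one_matrix, norm_unit z hz, norm_unit w hw]
    ring
  rw [key]
  have hT1 : |∑ i, ∑ j, (A z i j - A w i j) * uz j * uz i|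
      ≤ ((N:ℝ)+1)^2 * (Λ * ‖z - w‖) := by
    refine double_sum_const_bound fun i j => ?_
    rw [abs_mul, abs_mul]
    have h0 : (0:ℝ) ≤ Λ * ‖z - w‖ := by positivity
    calc |A z i j - A w i j| * |uz j| * |uz i| ≤ (Λ * ‖z - w‖) * 1 * 1 :=
        mul_le_mul (mul_le_mul (hlip i j z hzS w hwS) (unit_coord_le z hz j)
          (abs_nonneg _) h0) (unit_coord_le z hz i) (abs_nonneg _) (by positivity)
    _ = Λ * ‖z - w‖ := by ring
  have hT2 : |∑ i, ∑ j, (A w i j - (1 : Matrix (Fin (N+1)) (Fin (N+1)) ℝ) i j)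
      * (uz j * uz i - uw j * uw i)| ≤ ((N:ℝ)+1)^2 * (4 * Λ * ‖z - w‖) := by
    refine double_sum_const_bound fun i j => ?_
    rw [abs_mul]
    have hprod : |uz j * uz i - uw j * uw i| ≤ 2 * (2 * ‖z - w‖ / ‖z‖) := by
      have hsplit : uz j * uz i - uw j * uw i
          = uz j * (uz i - uw i) + uw i * (uz j - uw j) := by ring
      rw [hsplit]
      have hci : |uz i - uw i| ≤ ‖uz - uw‖ := by
        simpa using coord_le (uz - uw) i
      have hcj : |uz j - uw j| ≤ ‖uz - uw‖ := by
        simpa using coord_le (uz - uw) j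
      calc |uz j * (uz i - uw i) + uw i * (uz j - uw j)|
          ≤ |uz j * (uz i - uw i)| + |uw i * (uz j - uw j)| := abs_add_le _ _
      _ = |uz j| * |uz i - uw i| + |uw i| * |uz j - uw j| := by rw [abs_mul, abs_mul]
      _ ≤ 1 * ‖uz - uw‖ + 1 * ‖uz - uw‖ := by
          gcongr
          · exact unit_coord_le z hz j
          · exact unit_coord_le w hw i
      _ = 2 * ‖uz - uw‖ := by ring
      _ ≤ 2 * (2 * ‖z - w‖ / ‖z‖) := by
          have := unit_sub z w hz hw
          linarith
    have hAw : |A w i j - (1 : Matrix (Fin (N+1)) (Fin (N+1)) ℝ) i j| ≤ Λ * ‖w‖ :=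
      hid w hwS i j
    calc |A w i j - (1 : Matrix (Fin (N+1)) (Fin (N+1)) ℝ) i j|
          * |uz j * uz i - uw j * uw i|
        ≤ (Λ * ‖w‖) * (2 * (2 * ‖z - w‖ / ‖z‖)) :=
          mul_le_mul hAw hprod (abs_nonneg _) (by positivity)
    _ = (4 * Λ * ‖z - w‖) * (‖w‖ / ‖z‖) := by ring
    _ ≤ (4 * Λ * ‖z - w‖) * 1 := by
        gcongr
        exact (div_le_one haz).mpr hzw
    _ = 4 * Λ * ‖z - w‖ := by ring
  calc |(∑ i, ∑ j, (A z i j - A w i j) * uz j * uz i)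
        + (∑ i, ∑ j, (A w i j - (1 : Matrix (Fin (N+1)) (Fin (N+1)) ℝ) i j)
          * (uz j * uz i - uw j * uw i))| ≤ _ + _ := abs_add_le _ _
  _ ≤ ((N:ℝ)+1)^2 * (Λ * ‖z - w‖) + ((N:ℝ)+1)^2 * (4 * Λ * ‖z - w‖) :=
      add_le_add hT1 hT2
  _ = (5*((N:ℝ)+1)^2*Λ) * ‖z - w‖ := by ring

lemma mu_diff_bound (hΛ : 0 ≤ Λ)
    (hlip : ∀ i j, ∀ z ∈ closure (halfBall N R), ∀ w ∈ closure (halfBall N R),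
      |A z i j - A w i j| ≤ Λ * ‖z - w‖)
    (hid : ∀ z ∈ closure (halfBall N R), ∀ i j,
      |A z i j - (1 : Matrix (Fin (N+1)) (Fin (N+1)) ℝ) i j| ≤ Λ * ‖z‖)
    {z w : EuclideanSpace ℝ (Fin (N+1))}
    (hzS : z ∈ closure (halfBall N R)) (hwS : w ∈ closure (halfBall N R))
    (hz : z ≠ 0) (hw : w ≠ 0) :
    |muA A z - muA A w| ≤ (5*((N:ℝ)+1)^2*Λ) * ‖z - w‖ := by
  rcases le_total ‖w‖ ‖z‖ with h | h
  · exact mu_diff_bound_asym hΛ hlip hid hzS hwS hz hw h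
  · rw [abs_sub_comm, ← norm_sub_rev]
    exact mu_diff_bound_asym hΛ hlip hid hwS hzS hw hz h

lemma betaA_expand (z : EuclideanSpace ℝ (Fin (N+1))) (i : Fin (N+1)) :
    betaA A z i = (∑ j, A z i j * z j) / muA A z := by
  simp [betaA, Matrix.mulVec, dotProduct]

lemma mu_lb (hell : ∀ z ∈ closure (halfBall N R), ∀ y : EuclideanSpace ℝ (Fin (N+1)),
      lam1 * ‖y‖ ^ 2 ≤ quadA A z y y ∧ quadA A z y y ≤ lam2 * ‖y‖ ^ 2)
    {z : EuclideanSpace ℝ (Fin (N+1))} (hzS : z ∈ closure (halfBall N R)) (hz : z ≠ 0) :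
    lam1 ≤ muA A z := by
  have h := (hell z hzS z).1
  have hp : (0:ℝ) < ‖z‖^2 := pow_pos (norm_pos_iff.mpr hz) 2
  rw [muA, le_div_iff₀ hp]
  exact h

lemma v_bound (hb : ∀ z ∈ closure (halfBall N R), ∀ i j, |A z i j| ≤ Λ)
    {z : EuclideanSpace ℝ (Fin (N+1))} (hzS : z ∈ closure (halfBall N R)) (i : Fin (N+1)) :
    |∑ j, A z i j * z j| ≤ ((N:ℝ)+1) * (Λ * ‖z‖) := by
  calc |∑ j, A z i j * z j| ≤ ∑ j, |A z i j * z j| := Finset.abs_sum_le_sum_abs _ _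
  _ ≤ ∑ _j : Fin (N+1), Λ * ‖z‖ := Finset.sum_le_sum fun j _ => by
      rw [abs_mul]
      exact mul_le_mul (hb z hzS i j) (MuBetaAux.coord_le z j) (abs_nonneg _)
        (le_trans (abs_nonneg _) (hb z hzS i j))
  _ = ((N:ℝ)+1) * (Λ * ‖z‖) := by
      rw [Finset.sum_const, Finset.card_univ, Fintype.card_fin, nsmul_eq_mul]
      push_cast
      ring

lemma v_diff (hΛ : 0 ≤ Λ)
    (hb : ∀ z ∈ closure (halfBall N R), ∀ i j, |A z i j| ≤ Λ)
    (hlip : ∀ i j, ∀ z ∈ closure (halfBall N R), ∀ w ∈ closure (halfBall N R),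
      |A z i j - A w i j| ≤ Λ * ‖z - w‖)
    {z w : EuclideanSpace ℝ (Fin (N+1))}
    (hzS : z ∈ closure (halfBall N R)) (hwS : w ∈ closure (halfBall N R))
    (hzR : ‖z‖ ≤ R) (i : Fin (N+1)) :
    |(∑ j, A z i j * z j) - ∑ j, A w i j * w j| ≤ ((N:ℝ)+1) * ((Λ * R + Λ) * ‖z - w‖) := by
  rw [← Finset.sum_sub_distrib]
  calc |∑ j, (A z i j * z j - A w i j * w j)|
      ≤ ∑ j, |A z i j * z j - A w i j * w j| := Finset.abs_sum_le_sum_abs _ _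
  _ ≤ ∑ _j : Fin (N+1), (Λ * R + Λ) * ‖z - w‖ := by
      refine Finset.sum_le_sum fun j _ => ?_
      have hsplit : A z i j * z j - A w i j * w j
          = (A z i j - A w i j) * z j + A w i j * (z j - w j) := by ring
      rw [hsplit]
      have hzj : |z j| ≤ R := le_trans (MuBetaAux.coord_le z j) hzR
      have hdiff : |z j - w j| ≤ ‖z - w‖ := by
        simpa using MuBetaAux.coord_le (z - w) j
      calc |(A z i j - A w i j) * z j + A w i j * (z j - w j)|
          ≤ |(A z i j - A w i j) * z j| + |A w i j * (z j - w j)| := abs_add_le _ _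
      _ = |A z i j - A w i j| * |z j| + |A w i j| * |z j - w j| := by
          rw [abs_mul, abs_mul]
      _ ≤ (Λ * ‖z - w‖) * R + Λ * ‖z - w‖ := by
          refine add_le_add ?_ ?_
          · exact mul_le_mul (hlip i j z hzS w hwS) hzj (abs_nonneg _)
              (mul_nonneg hΛ (norm_nonneg _))
          · exact mul_le_mul (hb w hwS i j) hdiff (abs_nonneg _) hΛ
      _ = (Λ * R + Λ) * ‖z - w‖ := by ring
  _ = ((N:ℝ)+1) * ((Λ * R + Λ) * ‖z - w‖) := by
      rw [Finset.sum_const, Finset.card_univ, Fintype.card_fin, nsmul_eq_mul]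
      push_cast
      ring

lemma beta_bound (hΛ : 0 ≤ Λ)
    (hb : ∀ z ∈ closure (halfBall N R), ∀ i j, |A z i j| ≤ Λ)
    (hell : ∀ z ∈ closure (halfBall N R), ∀ y : EuclideanSpace ℝ (Fin (N+1)),
      lam1 * ‖y‖ ^ 2 ≤ quadA A z y y ∧ quadA A z y y ≤ lam2 * ‖y‖ ^ 2)
    (hlam1 : 0 < lam1)
    {z : EuclideanSpace ℝ (Fin (N+1))} (hzS : z ∈ closure (halfBall N R)) (hz : z ≠ 0)
    (i : Fin (N+1)) :
    |betaA A z i| ≤ (((N:ℝ)+1) * Λ / lam1) * ‖z‖ := by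
  rw [betaA_expand, abs_div]
  have hmu : lam1 ≤ muA A z := mu_lb hell hzS hz
  have hmupos : 0 < muA A z := lt_of_lt_of_le hlam1 hmu
  rw [abs_of_pos hmupos]
  calc |∑ j, A z i j * z j| / muA A z ≤ (((N:ℝ)+1) * (Λ * ‖z‖)) / lam1 :=
      div_le_div₀ (mul_nonneg (by positivity) (mul_nonneg hΛ (norm_nonneg _)))
        (v_bound hb hzS i) hlam1 hmu
  _ = (((N:ℝ)+1) * Λ / lam1) * ‖z‖ := by ring

lemma beta_diff (hΛ : 0 ≤ Λ)
    (hb : ∀ z ∈ closure (halfBall N R), ∀ i j, |A z i j| ≤ Λ)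
    (hlip : ∀ i j, ∀ z ∈ closure (halfBall N R), ∀ w ∈ closure (halfBall N R),
      |A z i j - A w i j| ≤ Λ * ‖z - w‖)
    (hid : ∀ z ∈ closure (halfBall N R), ∀ i j,
      |A z i j - (1 : Matrix (Fin (N+1)) (Fin (N+1)) ℝ) i j| ≤ Λ * ‖z‖)
    (hell : ∀ z ∈ closure (halfBall N R), ∀ y : EuclideanSpace ℝ (Fin (N+1)),
      lam1 * ‖y‖ ^ 2 ≤ quadA A z y y ∧ quadA A z y y ≤ lam2 * ‖y‖ ^ 2)
    (hlam1 : 0 < lam1) (hR0 : 0 ≤ R)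
    {z w : EuclideanSpace ℝ (Fin (N+1))}
    (hzS : z ∈ closure (halfBall N R)) (hwS : w ∈ closure (halfBall N R))
    (hz : z ≠ 0) (hw : w ≠ 0) (i : Fin (N+1)) :
    |betaA A z i - betaA A w i| ≤
      (((N:ℝ)+1) * (Λ * R + Λ) / lam1
        + (((N:ℝ)+1) * (Λ * R)) * (5*((N:ℝ)+1)^2*Λ) / lam1^2) * ‖z - w‖ := by
  have hzR : ‖z‖ ≤ R := norm_le_of_mem_closure_halfBall hzS
  have hwR : ‖w‖ ≤ R := norm_le_of_mem_closure_halfBall hwS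
  rw [betaA_expand z i, betaA_expand w i]
  set a := ∑ j, A z i j * z j with ha
  set b := ∑ j, A w i j * w j with hb'
  set p := muA A z with hp'
  set q := muA A w with hq'
  have hp : lam1 ≤ p := mu_lb hell hzS hz
  have hq : lam1 ≤ q := mu_lb hell hwS hw
  have hp0 : 0 < p := lt_of_lt_of_le hlam1 hp
  have hq0 : 0 < q := lt_of_lt_of_le hlam1 hq
  have key : a / p - b / q = (a - b) / p + b * (q - p) / (p * q) := by
    field_simp
    ring
  rw [key]
  have hvd : |a - b| ≤ ((N:ℝ)+1) * ((Λ * R + Λ) * ‖z - w‖) :=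
    v_diff hΛ hb hlip hzS hwS hzR i
  have hvb : |b| ≤ ((N:ℝ)+1) * (Λ * R) := by
    refine (v_bound hb hwS i).trans ?_
    have : Λ * ‖w‖ ≤ Λ * R := mul_le_mul_of_nonneg_left hwR hΛ
    nlinarith [this]
  have hK0 : (0:ℝ) ≤ Λ * R + Λ := add_nonneg (mul_nonneg hΛ hR0) hΛ
  have hqp : |q - p| ≤ (5*((N:ℝ)+1)^2*Λ) * ‖z - w‖ := by
    have h := mu_diff_bound hΛ hlip hid hzS hwS hz hw
    rw [← hp', ← hq'] at h
    rw [abs_sub_comm]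
    exact h
  have h1 : |a - b| / p ≤ (((N:ℝ)+1) * ((Λ * R + Λ) * ‖z - w‖)) / lam1 :=
    div_le_div₀ (mul_nonneg (by positivity) (mul_nonneg hK0 (norm_nonneg _))) hvd hlam1 hp
  have h2 : |b * (q - p)| / (p * q)
      ≤ ((((N:ℝ)+1) * (Λ * R)) * ((5*((N:ℝ)+1)^2*Λ) * ‖z - w‖)) / (lam1 * lam1) := by
    rw [abs_mul]
    have hb0 : (0:ℝ) ≤ ((N:ℝ)+1) * (Λ * R) :=
      mul_nonneg (by positivity) (mul_nonneg hΛ hR0)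
    have hq0' : (0:ℝ) ≤ (5*((N:ℝ)+1)^2*Λ) * ‖z - w‖ :=
      mul_nonneg (mul_nonneg (by positivity) hΛ) (norm_nonneg _)
    refine div_le_div₀ (mul_nonneg hb0 hq0') ?_ (mul_pos hlam1 hlam1) ?_
    · exact mul_le_mul hvb hqp (abs_nonneg _) hb0
    · exact mul_le_mul hp hq hlam1.le hp0.le
  calc |(a - b) / p + b * (q - p) / (p * q)|
      ≤ |(a - b) / p| + |b * (q - p) / (p * q)| := abs_add_le _ _
  _ = |a - b| / p + |b * (q - p)| / (p * q) := by
      rw [abs_div, abs_of_pos hp0, abs_div, abs_of_pos (mul_pos hp0 hq0)]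
  _ ≤ (((N:ℝ)+1) * ((Λ * R + Λ) * ‖z - w‖)) / lam1
      + ((((N:ℝ)+1) * (Λ * R)) * ((5*((N:ℝ)+1)^2*Λ) * ‖z - w‖)) / (lam1 * lam1) :=
      add_le_add h1 h2
  _ = (((N:ℝ)+1) * (Λ * R + Λ) / lam1
      + (((N:ℝ)+1) * (Λ * R)) * (5*((N:ℝ)+1)^2*Λ) / lam1^2) * ‖z - w‖ := by
      field_simp


end MuBetaCore

set_option maxHeartbeats 3200000 in
/-- Lipschitz regularity of `μ`, `1/μ`, `β` on the closed half-ball,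
and `L^∞` bounds for `J_β`, `div β`, `β'`, `div_x β'`. -/
theorem mu_beta_regularity
    {N : ℕ} (s R lam1 lam2 Λ : ℝ) (hs : s ∈ Set.Ioo (0 : ℝ) 1) (hN : 2 * s < (N : ℝ))
    (hR : 0 < R) (hlam1 : 0 < lam1)
    (A : EuclideanSpace ℝ (Fin (N + 1)) → Matrix (Fin (N + 1)) (Fin (N + 1)) ℝ)
    (hA : GoodMatrix R Λ lam1 lam2 A) (hA0 : A 0 = 1) :
    ∃ (μt : EuclideanSpace ℝ (Fin (N + 1)) → ℝ)
      (βt : EuclideanSpace ℝ (Fin (N + 1)) → EuclideanSpace ℝ (Fin (N + 1)))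
      (L : NNReal) (M : ℝ),
      (∀ z ∈ closure (halfBall N R), z ≠ 0 → μt z = muA A z) ∧
      (∀ z ∈ closure (halfBall N R), z ≠ 0 → ∀ i, βt z i = betaA A z i) ∧
      LipschitzOnWith L μt (closure (halfBall N R)) ∧
      LipschitzOnWith L (fun z => 1 / μt z) (closure (halfBall N R)) ∧
      LipschitzOnWith L βt (closure (halfBall N R)) ∧
      0 ≤ M ∧
      (∀ᵐ z ∂(volume.restrict (halfBall N R)),
        ‖fderiv ℝ βt z‖ ≤ M ∧
        |∑ i : Fin (N + 1), fderiv ℝ (fun w => βt w i) z (EuclideanSpace.single i 1)|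
          ≤ M) ∧
      (∀ x ∈ disc N R, ∀ i : Fin N, |βt (up x 0) i.castSucc| ≤ M) ∧
      (∀ᵐ x ∂(volume.restrict (disc N R)),
        |∑ i : Fin N, fderiv ℝ (fun y => βt (up y 0) i.castSucc) x
            (EuclideanSpace.single i 1)| ≤ M) := by
  classical
  obtain ⟨hsym, hblock, hentry, hell⟩ := hA
  have h0S : (0 : EuclideanSpace ℝ (Fin (N+1))) ∈ closure (halfBall N R) :=
    zero_mem_closure_halfBall hR
  have hΛ1 : (1:ℝ) ≤ Λ := by
    have h := (hentry 0 0).1 0 h0S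
    rw [hA0] at h
    simpa [Matrix.one_apply_eq] using h
  have hΛ : (0:ℝ) ≤ Λ := le_trans zero_le_one hΛ1
  have hb : ∀ z ∈ closure (halfBall N R), ∀ i j, |A z i j| ≤ Λ :=
    fun z hz i j => (hentry i j).1 z hz
  have hlip : ∀ i j, ∀ z ∈ closure (halfBall N R), ∀ w ∈ closure (halfBall N R),
      |A z i j - A w i j| ≤ Λ * ‖z - w‖ := by
    intro i j z hz w hw
    have h := (lipschitzOnWith_iff_dist_le_mul.mp (hentry i j).2) z hz w hw
    rwa [Real.dist_eq, dist_eq_norm, Real.coe_toNNReal _ hΛ] at h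
  have hid : ∀ z ∈ closure (halfBall N R), ∀ i j,
      |A z i j - (1 : Matrix (Fin (N+1)) (Fin (N+1)) ℝ) i j| ≤ Λ * ‖z‖ := by
    intro z hz i j
    have h := hlip i j z hz 0 h0S
    rwa [hA0, sub_zero] at h
  have hlam1le1 : lam1 ≤ 1 := by
    have h := (hell 0 h0S (EuclideanSpace.single 0 1)).1
    have hq : quadA A 0 (EuclideanSpace.single 0 1) (EuclideanSpace.single 0 1)
        = ‖(EuclideanSpace.single 0 1 : EuclideanSpace ℝ (Fin (N+1)))‖^2 := by
      simp only [quadA, hA0]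
      exact sum_one_matrix _
    rw [hq] at h
    have hn : ‖(EuclideanSpace.single 0 1 : EuclideanSpace ℝ (Fin (N+1)))‖ = 1 := by
      rw [EuclideanSpace.norm_single]; norm_num
    rw [hn] at h
    simpa using h
  -- constants
  set Kμ : ℝ := 5*((N:ℝ)+1)^2*Λ with hKμdef
  have hKμ0 : 0 ≤ Kμ := by rw [hKμdef]; positivity
  set Kb : ℝ := ((N:ℝ)+1) * (Λ * R + Λ) / lam1
      + (((N:ℝ)+1) * (Λ * R)) * (5*((N:ℝ)+1)^2*Λ) / lam1^2 with hKbdef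
  have hKb0 : 0 ≤ Kb := by
    rw [hKbdef]
    have t1 : (0:ℝ) ≤ ((N:ℝ)+1) * (Λ * R + Λ) / lam1 :=
      div_nonneg (mul_nonneg (by positivity) (add_nonneg (mul_nonneg hΛ hR.le) hΛ)) hlam1.le
    have t2 : (0:ℝ) ≤ (((N:ℝ)+1) * (Λ * R)) * (5*((N:ℝ)+1)^2*Λ) / lam1^2 :=
      div_nonneg (mul_nonneg (mul_nonneg (by positivity) (mul_nonneg hΛ hR.le))
        (mul_nonneg (by positivity) hΛ)) (by positivity)
    linarith
  have hKbge : ((N:ℝ)+1)*Λ/lam1 ≤ Kb := by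
    rw [hKbdef]
    have t2 : (0:ℝ) ≤ (((N:ℝ)+1) * (Λ * R)) * (5*((N:ℝ)+1)^2*Λ) / lam1^2 :=
      div_nonneg (mul_nonneg (mul_nonneg (by positivity) (mul_nonneg hΛ hR.le))
        (mul_nonneg (by positivity) hΛ)) (by positivity)
    have t1 : ((N:ℝ)+1)*Λ/lam1 ≤ ((N:ℝ)+1) * (Λ * R + Λ) / lam1 := by
      apply div_le_div_of_nonneg_right ?_ hlam1.le
      have : (0:ℝ) ≤ ((N:ℝ)+1) * (Λ * R) := mul_nonneg (by positivity) (mul_nonneg hΛ hR.le)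
      nlinarith
    linarith
  -- μ with value 1 at the origin
  set μT : EuclideanSpace ℝ (Fin (N+1)) → ℝ :=
    fun z => if z = 0 then 1 else muA A z with hμTdef
  have hμT_lb : ∀ z ∈ closure (halfBall N R), lam1 ≤ μT z := by
    intro z hz
    by_cases h : z = 0
    · have e0 : μT z = 1 := by rw [hμTdef]; simp [h]
      rw [e0]; exact hlam1le1
    · have e2 : μT z = muA A z := by rw [hμTdef]; simp [h]
      rw [e2]; exact mu_lb hell hz h
  have hμdiff : ∀ z ∈ closure (halfBall N R), ∀ w ∈ closure (halfBall N R),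
      |μT z - μT w| ≤ Kμ * ‖z - w‖ := by
    have haux : ∀ w ∈ closure (halfBall N R), w ≠ 0 →
        |1 - muA A w| ≤ Kμ * ‖w‖ := by
      intro w hw h2
      have h := mu_sub_one_bound hid hw h2
      have hgrow : ((N:ℝ)+1)^2*(Λ*‖w‖) ≤ Kμ * ‖w‖ := by
        rw [hKμdef]
        nlinarith [mul_nonneg (mul_nonneg (by positivity : (0:ℝ) ≤ ((N:ℝ)+1)^2) hΛ)
          (norm_nonneg w)]
      calc |1 - muA A w| = |muA A w - 1| := abs_sub_comm _ _
      _ ≤ ((N:ℝ)+1)^2*(Λ*‖w‖) := h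
      _ ≤ Kμ * ‖w‖ := hgrow
    intro z hz w hw
    have e0 : μT 0 = 1 := by rw [hμTdef]; simp
    by_cases h1 : z = 0 <;> by_cases h2 : w = 0
    · subst h1; subst h2
      simp [mul_nonneg hKμ0 (norm_nonneg (0 - (0:EuclideanSpace ℝ (Fin (N+1)))))]
    · subst h1
      have e2 : μT w = muA A w := by rw [hμTdef]; simp [h2]
      rw [e0, e2, zero_sub, norm_neg]
      exact haux w hw h2
    · subst h2
      have e2 : μT z = muA A z := by rw [hμTdef]; simp [h1]
      rw [e0, e2, sub_zero, abs_sub_comm]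
      exact haux z hz h1
    · have e1 : μT z = muA A z := by rw [hμTdef]; simp [h1]
      have e2 : μT w = muA A w := by rw [hμTdef]; simp [h2]
      rw [e1, e2]
      exact mu_diff_bound hΛ hlip hid hz hw h1 h2
  have hinv : ∀ z ∈ closure (halfBall N R), ∀ w ∈ closure (halfBall N R),
      |1/μT z - 1/μT w| ≤ (Kμ/lam1^2) * ‖z - w‖ := by
    intro z hz w hw
    have hpz := hμT_lb z hz
    have hpw := hμT_lb w hw
    have hz0 : 0 < μT z := lt_of_lt_of_le hlam1 hpz
    have hw0 : 0 < μT w := lt_of_lt_of_le hlam1 hpw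
    have key : 1/μT z - 1/μT w = (μT w - μT z)/(μT z * μT w) := by
      field_simp
    rw [key, abs_div, abs_of_pos (mul_pos hz0 hw0)]
    have hnum : |μT w - μT z| ≤ Kμ * ‖z - w‖ := by
      have := hμdiff w hw z hz
      rwa [norm_sub_rev] at this
    calc |μT w - μT z| / (μT z * μT w) ≤ (Kμ * ‖z - w‖) / (lam1 * lam1) :=
        div_le_div₀ (mul_nonneg hKμ0 (norm_nonneg _)) hnum (mul_pos hlam1 hlam1)
          (mul_le_mul hpz hpw hlam1.le hz0.le)
    _ = (Kμ/lam1^2) * ‖z - w‖ := by rw [pow_two]; ring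
  -- β coordinates, with value 0 at the origin
  set bC : Fin (N+1) → EuclideanSpace ℝ (Fin (N+1)) → ℝ :=
    fun i z => if z = 0 then 0 else betaA A z i with hbCdef
  have hbCdiff : ∀ i, ∀ z ∈ closure (halfBall N R), ∀ w ∈ closure (halfBall N R),
      |bC i z - bC i w| ≤ Kb * ‖z - w‖ := by
    have haux : ∀ i, ∀ w ∈ closure (halfBall N R), w ≠ 0 → |betaA A w i| ≤ Kb * ‖w‖ := by
      intro i w hw h2
      calc |betaA A w i| ≤ (((N:ℝ)+1) * Λ / lam1) * ‖w‖ :=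
          beta_bound hΛ hb hell hlam1 hw h2 i
      _ ≤ Kb * ‖w‖ := mul_le_mul_of_nonneg_right hKbge (norm_nonneg _)
    intro i z hz w hw
    have e0 : bC i 0 = 0 := by rw [hbCdef]; simp
    by_cases h1 : z = 0 <;> by_cases h2 : w = 0
    · subst h1; subst h2
      simp [mul_nonneg hKb0 (norm_nonneg (0 - (0:EuclideanSpace ℝ (Fin (N+1)))))]
    · subst h1
      have e2 : bC i w = betaA A w i := by rw [hbCdef]; simp [h2]
      rw [e0, e2, zero_sub, abs_neg, zero_sub, norm_neg]
      exact haux i w hw h2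
    · subst h2
      have e2 : bC i z = betaA A z i := by rw [hbCdef]; simp [h1]
      rw [e0, e2, sub_zero, sub_zero]
      exact haux i z hz h1
    · have e1 : bC i z = betaA A z i := by rw [hbCdef]; simp [h1]
      have e2 : bC i w = betaA A w i := by rw [hbCdef]; simp [h2]
      rw [e1, e2]
      exact beta_diff hΛ hb hlip hid hell hlam1 hR.le hz hw h1 h2 i
  have hbCb : ∀ i, ∀ z ∈ closure (halfBall N R), |bC i z| ≤ Kb * R := by
    intro i z hz
    by_cases h : z = 0
    · have e0 : bC i z = 0 := by rw [hbCdef]; simp [h]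
      rw [e0, abs_zero]
      exact mul_nonneg hKb0 hR.le
    · have e2 : bC i z = betaA A z i := by rw [hbCdef]; simp [h]
      rw [e2]
      calc |betaA A z i| ≤ (((N:ℝ)+1) * Λ / lam1) * ‖z‖ :=
          beta_bound hΛ hb hell hlam1 hz h i
      _ ≤ Kb * R := by
          refine mul_le_mul hKbge (norm_le_of_mem_closure_halfBall hz) (norm_nonneg _) hKb0
  -- extend coordinates to globally Lipschitz functions
  have hlipOn : ∀ i, LipschitzOnWith (Real.toNNReal Kb) (bC i) (closure (halfBall N R)) := by
    intro i
    rw [lipschitzOnWith_iff_dist_le_mul]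
    intro z hz w hw
    rw [Real.dist_eq, dist_eq_norm, Real.coe_toNNReal _ hKb0]
    exact hbCdiff i z hz w hw
  choose g hg hEq using fun i => (hlipOn i).extend_real
  have hNKb0 : (0:ℝ) ≤ ((N:ℝ)+1)*Kb := mul_nonneg (by positivity) hKb0
  have hKinv0 : (0:ℝ) ≤ Kμ/lam1^2 := div_nonneg hKμ0 (by positivity)
  have hCL0 : (0:ℝ) ≤ Kμ + Kμ/lam1^2 + ((N:ℝ)+1)*Kb :=
    add_nonneg (add_nonneg hKμ0 hKinv0) hNKb0
  have hle3 : Kμ ≤ Kμ + Kμ/lam1^2 + ((N:ℝ)+1)*Kb :=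
    le_trans (le_add_of_nonneg_right hKinv0) (le_add_of_nonneg_right hNKb0)
  have hle4 : Kμ/lam1^2 ≤ Kμ + Kμ/lam1^2 + ((N:ℝ)+1)*Kb :=
    le_trans (le_add_of_nonneg_left hKμ0) (le_add_of_nonneg_right hNKb0)
  have hle5 : ((N:ℝ)+1)*Kb ≤ Kμ + Kμ/lam1^2 + ((N:ℝ)+1)*Kb :=
    le_add_of_nonneg_left (add_nonneg hKμ0 hKinv0)
  have hLcoe : ((Real.toNNReal (Kμ + Kμ/lam1^2 + ((N:ℝ)+1)*Kb) : NNReal) : ℝ)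
      = Kμ + Kμ/lam1^2 + ((N:ℝ)+1)*Kb := Real.coe_toNNReal _ hCL0
  have hgdist : ∀ i z w, |g i z - g i w| ≤ Kb * ‖z - w‖ := by
    intro i z w
    have h := (hg i).dist_le_mul z w
    rwa [Real.dist_eq, dist_eq_norm, Real.coe_toNNReal _ hKb0] at h
  have hβdist : ∀ z w : EuclideanSpace ℝ (Fin (N+1)),
      ‖((EuclideanSpace.equiv (Fin (N+1)) ℝ).symm (fun i => g i z)
          : EuclideanSpace ℝ (Fin (N+1)))
        - (EuclideanSpace.equiv (Fin (N+1)) ℝ).symm (fun i => g i w)‖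
      ≤ (((N:ℝ)+1)*Kb) * ‖z - w‖ := by
    intro z w
    calc ‖((EuclideanSpace.equiv (Fin (N+1)) ℝ).symm (fun i => g i z)
          : EuclideanSpace ℝ (Fin (N+1)))
        - (EuclideanSpace.equiv (Fin (N+1)) ℝ).symm (fun i => g i w)‖
        ≤ ∑ i, |(((EuclideanSpace.equiv (Fin (N+1)) ℝ).symm (fun i => g i z)
            : EuclideanSpace ℝ (Fin (N+1)))
          - (EuclideanSpace.equiv (Fin (N+1)) ℝ).symm (fun i => g i w)) i| :=
          MuBetaAux.norm_le_sum _
    _ ≤ ∑ _i : Fin (N+1), Kb * ‖z - w‖ := Finset.sum_le_sum fun i _ => hgdist i z w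
    _ = (((N:ℝ)+1)*Kb) * ‖z - w‖ := by
        rw [Finset.sum_const, Finset.card_univ, Fintype.card_fin, nsmul_eq_mul]
        push_cast
        ring
  have hβlip : LipschitzWith (Real.toNNReal (((N:ℝ)+1)*Kb))
      (fun z => ((EuclideanSpace.equiv (Fin (N+1)) ℝ).symm (fun i => g i z)
        : EuclideanSpace ℝ (Fin (N+1)))) := by
    rw [lipschitzWith_iff_dist_le_mul]
    intro z w
    rw [dist_eq_norm, dist_eq_norm, Real.coe_toNNReal _ hNKb0]
    exact hβdist z w
  have hKbRM : Kb * R ≤ ((N:ℝ)+1) * Kb * (1+R) := by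
    nlinarith [mul_nonneg hKb0 hR.le, mul_nonneg (mul_nonneg hKb0 (Nat.cast_nonneg N : (0:ℝ) ≤ N)) hR.le,
      mul_nonneg hKb0 (Nat.cast_nonneg N : (0:ℝ) ≤ N)]
  have hNKbM : ((N:ℝ)+1) * Kb ≤ ((N:ℝ)+1) * Kb * (1+R) := by
    nlinarith [mul_nonneg hNKb0 hR.le]
  -- the extended vector field
  clear_value Kμ Kb μT bC
  refine ⟨μT,
    fun z => (EuclideanSpace.equiv (Fin (N+1)) ℝ).symm (fun i => g i z),
    Real.toNNReal (Kμ + Kμ/lam1^2 + ((N:ℝ)+1)*Kb),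
    ((N:ℝ)+1) * Kb * (1+R), ?_, ?_, ?_, ?_, ?_, ?_, ?_, ?_, ?_⟩
  · intro z _ h0
    rw [hμTdef]
    simp [h0]
  · intro z hzS h0 i
    have : g i z = bC i z := (hEq i hzS).symm
    show g i z = betaA A z i
    rw [this, hbCdef]; simp only [if_neg h0]
  · rw [lipschitzOnWith_iff_dist_le_mul]
    intro z hz w hw
    rw [Real.dist_eq, dist_eq_norm, hLcoe]
    exact le_trans (hμdiff z hz w hw)
      (mul_le_mul_of_nonneg_right hle3 (norm_nonneg _))
  · rw [lipschitzOnWith_iff_dist_le_mul]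
    intro z hz w hw
    rw [Real.dist_eq, dist_eq_norm, hLcoe]
    exact le_trans (hinv z hz w hw)
      (mul_le_mul_of_nonneg_right hle4 (norm_nonneg _))
  · rw [lipschitzOnWith_iff_dist_le_mul]
    intro z hz w hw
    rw [dist_eq_norm, dist_eq_norm, hLcoe]
    exact le_trans (hβdist z w)
      (mul_le_mul_of_nonneg_right hle5 (norm_nonneg _))
  · exact mul_nonneg (mul_nonneg (by positivity) hKb0) (by positivity)
  · refine ae_of_all _ fun z => ⟨?_, ?_⟩
    · have h := norm_fderiv_le_of_lipschitz ℝ hβlip (x₀ := z)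
      rw [Real.coe_toNNReal _ hNKb0] at h
      exact le_trans h hNKbM
    · show |∑ i : Fin (N+1), fderiv ℝ (g i) z (EuclideanSpace.single i 1)|
        ≤ ((N:ℝ)+1) * Kb * (1+R)
      have hterm : ∀ i : Fin (N+1),
          |fderiv ℝ (g i) z (EuclideanSpace.single i 1)| ≤ Kb := by
        intro i
        have h := MuBetaAux.fderiv_bound (hg i) z (EuclideanSpace.single i 1)
        rwa [Real.coe_toNNReal _ hKb0, EuclideanSpace.norm_single, norm_one, mul_one] at h
      calc |∑ i : Fin (N+1), fderiv ℝ (g i) z (EuclideanSpace.single i 1)|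
          ≤ ∑ i, |fderiv ℝ (g i) z (EuclideanSpace.single i 1)| :=
            Finset.abs_sum_le_sum_abs _ _
      _ ≤ ∑ _i : Fin (N+1), Kb := Finset.sum_le_sum fun i _ => hterm i
      _ = ((N:ℝ)+1) * Kb := by
          rw [Finset.sum_const, Finset.card_univ, Fintype.card_fin, nsmul_eq_mul]
          push_cast
          ring
      _ ≤ ((N:ℝ)+1) * Kb * (1+R) := hNKbM
  · intro x hx i
    have hxlt : ‖x‖ < R := by simpa [disc, mem_ball_zero_iff] using hx
    have hmem := mem_closure_up x hxlt
    show |g i.castSucc (up x 0)| ≤ ((N:ℝ)+1) * Kb * (1+R)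
    rw [← hEq i.castSucc hmem]
    exact le_trans (hbCb i.castSucc _ hmem) hKbRM
  · refine ae_of_all _ fun x => ?_
    show |∑ i : Fin N, fderiv ℝ (fun y => g i.castSucc (up y 0)) x
        (EuclideanSpace.single i 1)| ≤ ((N:ℝ)+1) * Kb * (1+R)
    have hup : LipschitzWith 1 (fun y : EuclideanSpace ℝ (Fin N) => up y 0) := by
      rw [lipschitzWith_iff_dist_le_mul]
      intro a b
      rw [dist_eq_norm, dist_eq_norm, up_sub_up, norm_up_zero, NNReal.coe_one, one_mul]
    have hterm : ∀ i : Fin N,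
        |fderiv ℝ (fun y => g i.castSucc (up y 0)) x (EuclideanSpace.single i 1)| ≤ Kb := by
      intro i
      have hcomp : LipschitzWith (Real.toNNReal Kb * 1)
          (fun y => g i.castSucc (up y 0)) := (hg i.castSucc).comp hup
      have h := MuBetaAux.fderiv_bound hcomp x (EuclideanSpace.single i 1)
      rw [EuclideanSpace.norm_single, norm_one, mul_one] at h
      calc |fderiv ℝ (fun y => g i.castSucc (up y 0)) x (EuclideanSpace.single i 1)|
          ≤ ((Real.toNNReal Kb * 1 : NNReal) : ℝ) := h
      _ = Kb := by rw [mul_one, Real.coe_toNNReal _ hKb0]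
    have habs : |∑ i : Fin N, fderiv ℝ (fun y => g i.castSucc (up y 0)) x (EuclideanSpace.single i 1)| ≤ ∑ i : Fin N, |fderiv ℝ (fun y => g i.castSucc (up y 0)) x (EuclideanSpace.single i 1)| := Finset.abs_sum_le_sum_abs _ _
    have hsum : ∑ i : Fin N, |fderiv ℝ (fun y => g i.castSucc (up y 0)) x (EuclideanSpace.single i 1)| ≤ ∑ _i : Fin N, Kb := Finset.sum_le_sum fun i _ => hterm i
    have hconst : ∑ _i : Fin N, Kb = (N:ℝ) * Kb := by
      rw [Finset.sum_const, Finset.card_univ, Fintype.card_fin, nsmul_eq_mul]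
    have hfin : (N:ℝ) * Kb ≤ ((N:ℝ)+1) * Kb * (1+R) := by
      nlinarith [hKb0, mul_nonneg hKb0 hR.le,
        mul_nonneg (mul_nonneg (Nat.cast_nonneg N : (0:ℝ) ≤ N) hKb0) hR.le,
        mul_nonneg (Nat.cast_nonneg N : (0:ℝ) ≤ N) hKb0]
    rw [hconst] at hsum
    exact le_trans habs (le_trans hsum hfin)


end
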